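/- Let H satisfy (HT). The map x ↦ 2H(x) / ((1 + H'(x))(1 - H'(x))) is strictly monotone increasing on [d₁, ∞), where d₁ is the unique positive root of x(1 + H'(x)) - 2H(x). -/

import Mathlib

/-!
Write `ψ x = x (1 + H' x) - 2 H x`, so that `ψ' = g := 1 - H' + x H''` and `g' = x H'''`.
Since `ψ 0 = ψ d₁ = 0` and `ψ` has no zero in between, the mean value theorem gives a point
`c ∈ (0, d₁)` with `g c > 0`. As `g 0 = 0` and `g` decreases on `[0, z_H]` and increases afterwards,
`c` lies beyond `z_H`, so `g > 0` on `[d₁, ∞)` and hence `ψ > 0` on `(d₁, ∞)`. There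
`2 H < x (1 + H')` and `H'' < 0` give `φ = 1 - H'² + 2 H H'' > (1 + H') g > 0`, and the derivative
of `2 H / (1 - H'²)` is `2 H' φ / (1 - H'²)²`.
-/

open Set

lemma exists_pos_deriv_of_ne {f f' : ℝ → ℝ} {a m b : ℝ} (ham : a < m) (hmb : m < b)
    (hf : ContinuousOn f (Icc a b)) (hf' : ∀ x ∈ Ioo a b, HasDerivAt f (f' x) x)
    (hfab : f a = f b) (hm : f m ≠ f a) : ∃ c ∈ Ioo a b, 0 < f' c := by
  rcases hm.lt_or_gt with hlt | hgt
  · obtain ⟨c, hc, hc'⟩ := exists_hasDerivAt_eq_slope f f' hmb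
      (hf.mono (Icc_subset_Icc ham.le le_rfl))
      fun x hx => hf' x ⟨ham.trans hx.1, hx.2⟩
    refine ⟨c, ⟨ham.trans hc.1, hc.2⟩, ?_⟩
    rw [hc']
    exact div_pos (by linarith) (by linarith)
  · obtain ⟨c, hc, hc'⟩ := exists_hasDerivAt_eq_slope f f' ham
      (hf.mono (Icc_subset_Icc le_rfl hmb.le))
      fun x hx => hf' x ⟨hx.1, hx.2.trans hmb⟩
    refine ⟨c, ⟨hc.1, hc.2.trans hmb⟩, ?_⟩
    rw [hc']
    exact div_pos (by linarith) (by linarith)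

lemma pos_of_antitoneOn_of_monotoneOn {g : ℝ → ℝ} {z c x : ℝ} (hg0 : g 0 = 0)
    (hanti : AntitoneOn g (Icc 0 z)) (hmono : MonotoneOn g (Ici z))
    (hc : 0 ≤ c) (hgc : 0 < g c) (hcx : c ≤ x) : 0 < g x := by
  have hzc : z < c := by
    by_contra! hcz
    have := hanti ⟨le_rfl, hc.trans hcz⟩ ⟨hc, hcz⟩ hc
    linarith
  exact hgc.trans_le (hmono hzc.le (hzc.le.trans hcx) hcx)

lemma one_sub_sq_add_two_mul_mul_pos {p b h x : ℝ} (hp : 0 < 1 + p) (hb : b < 0)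
    (hh : 2 * h < x * (1 + p)) (hg : 0 < 1 - p + x * b) : 0 < 1 - p ^ 2 + 2 * h * b := by
  have hhb : x * (1 + p) * b < 2 * h * b := mul_lt_mul_of_neg_right hh hb
  nlinarith [mul_pos hp hg]

lemma strictMonoOn_two_mul_div_one_sub_mul {u v w : ℝ → ℝ} {d : ℝ}
    (hu : ∀ x, HasDerivAt u (v x) x) (hv : ∀ x, HasDerivAt v (w x) x)
    (hv_mem : ∀ x, d ≤ x → 0 < v x ∧ v x < 1)
    (hφ : ∀ x, d < x → 0 < 1 - v x ^ 2 + 2 * u x * w x) :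
    StrictMonoOn (fun x => 2 * u x / ((1 + v x) * (1 - v x))) (Ici d) := by
  have hden : ∀ x, d ≤ x → 0 < (1 + v x) * (1 - v x) := fun x hx => by
    obtain ⟨h0, h1⟩ := hv_mem x hx
    exact mul_pos (by linarith) (by linarith)
  have hquot (x) (hx : d ≤ x) : HasDerivAt (fun x => 2 * u x / ((1 + v x) * (1 - v x)))
      (2 * v x * (1 - v x ^ 2 + 2 * u x * w x) / ((1 + v x) * (1 - v x)) ^ 2) x := by
    have hD : HasDerivAt (fun x => (1 + v x) * (1 - v x)) (w x * (1 - v x) + (1 + v x) * -w x) x :=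
      ((hv x).const_add 1).mul ((hv x).const_sub 1)
    exact (((hu x).const_mul 2).div hD (hden x hx).ne').congr_deriv (by ring)
  refine strictMonoOn_of_hasDerivWithinAt_pos (convex_Ici d)
    (fun x hx => (hquot x hx).continuousAt.continuousWithinAt)
    (fun x hx => (hquot x (interior_subset hx)).hasDerivWithinAt) fun x hx => ?_
  rw [interior_Ici] at hx
  exact div_pos (mul_pos (by linarith [(hv_mem x hx.le).1]) (hφ x hx)) (pow_pos (hden x hx.le) 2)

noncomputable section
namespace HTProfile

variable {H : ℝ → ℝ} {x : ℝ}

def psi (H : ℝ → ℝ) (x : ℝ) : ℝ := x * (1 + deriv H x) - 2 * H x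

def psiDeriv (H : ℝ → ℝ) (x : ℝ) : ℝ := 1 - deriv H x + x * deriv (deriv H) x

lemma hasDerivAt_psi (hH : DifferentiableAt ℝ H x) (hH' : DifferentiableAt ℝ (deriv H) x) :
    HasDerivAt (psi H) (psiDeriv H x) x := by
  have h : HasDerivAt (fun y => y * (1 + deriv H y) - 2 * H y)
      (1 * (1 + deriv H x) + x * deriv (deriv H) x - 2 * deriv H x) x :=
    ((hasDerivAt_id' x).mul (hH'.hasDerivAt.const_add 1)).sub (hH.hasDerivAt.const_mul 2)
  exact h.congr_deriv (by rw [psiDeriv]; ring)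

lemma hasDerivAt_psiDeriv (hH' : DifferentiableAt ℝ (deriv H) x)
    (hH'' : DifferentiableAt ℝ (deriv (deriv H)) x) :
    HasDerivAt (psiDeriv H) (x * deriv (deriv (deriv H)) x) x := by
  have h : HasDerivAt (fun y => 1 - deriv H y + y * deriv (deriv H) y)
      (-deriv (deriv H) x + (1 * deriv (deriv H) x + x * deriv (deriv (deriv H)) x)) x :=
    (hH'.hasDerivAt.const_sub 1).add ((hasDerivAt_id' x).mul hH''.hasDerivAt)
  exact h.congr_deriv (by ring)

lemma antitoneOn_psiDeriv {z : ℝ} (hH : Differentiable ℝ (deriv H))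
    (hH' : Differentiable ℝ (deriv (deriv H)))
    (h3 : ∀ x : ℝ, 0 ≤ x → x ≤ z → deriv (deriv (deriv H)) x ≤ 0) :
    AntitoneOn (psiDeriv H) (Icc 0 z) := by
  have hg (x) := hasDerivAt_psiDeriv (hH x) (hH' x)
  refine antitoneOn_of_hasDerivWithinAt_nonpos (convex_Icc 0 z)
    (fun x _ => (hg x).continuousAt.continuousWithinAt)
    (fun x _ => (hg x).hasDerivWithinAt) fun x hx => ?_
  rw [interior_Icc] at hx
  exact mul_nonpos_of_nonneg_of_nonpos hx.1.le (h3 x hx.1.le hx.2.le)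

lemma monotoneOn_psiDeriv {z : ℝ} (hz : 0 ≤ z) (hH : Differentiable ℝ (deriv H))
    (hH' : Differentiable ℝ (deriv (deriv H)))
    (h3 : ∀ x : ℝ, z < x → 0 < deriv (deriv (deriv H)) x) :
    MonotoneOn (psiDeriv H) (Ici z) := by
  have hg (x) := hasDerivAt_psiDeriv (hH x) (hH' x)
  refine monotoneOn_of_hasDerivWithinAt_nonneg (convex_Ici z)
    (fun x _ => (hg x).continuousAt.continuousWithinAt)
    (fun x _ => (hg x).hasDerivWithinAt) fun x hx => ?_
  rw [interior_Ici] at hx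
  exact (mul_pos (hz.trans_lt hx) (h3 x hx)).le

end HTProfile
end

open HTProfile in
theorem stmt_10_general (H : ℝ → ℝ) (zH : ℝ) (hzH : 0 < zH)
    (hC3 : ContDiff ℝ 3 H)
    (h0 : H 0 = 0) (h1 : deriv H 0 = 1)
    (hH' : ∀ x > (0:ℝ), 0 < deriv H x ∧ deriv H x < 1)
    (hconc : ∀ x > (0:ℝ), deriv (deriv H) x < 0)
    (h3a : ∀ x : ℝ, 0 ≤ x → x ≤ zH → deriv (deriv (deriv H)) x ≤ 0)
    (h3b : ∀ x : ℝ, zH < x → 0 < deriv (deriv (deriv H)) x)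
    (d₁ : ℝ) (hd₁ : 0 < d₁)
    (hroot : d₁ * (1 + deriv H d₁) = 2 * H d₁)
    (huniq : ∀ x > (0:ℝ), x * (1 + deriv H x) = 2 * H x → x = d₁) :
    StrictMonoOn (fun x => 2 * H x / ((1 + deriv H x) * (1 - deriv H x)))
      (Set.Ici d₁) := by
  have dH : Differentiable ℝ H := hC3.differentiable (by norm_num)
  have dH' : Differentiable ℝ (deriv H) := (hC3.iterate_deriv' 2 1).differentiable (by norm_num)
  have dH'' : Differentiable ℝ (deriv (deriv H)) :=
    (hC3.iterate_deriv' 1 2).differentiable (by norm_num)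
  have hψ (x) : HasDerivAt (psi H) (psiDeriv H x) x := hasDerivAt_psi (dH x) (dH' x)
  obtain ⟨c, hc, hgc⟩ := exists_pos_deriv_of_ne (half_pos hd₁) (half_lt_self hd₁)
    (fun x _ => (hψ x).continuousAt.continuousWithinAt) (fun x _ => hψ x)
    (by simp [psi, h0, hroot]) fun h =>
      (half_lt_self hd₁).ne (huniq _ (half_pos hd₁) (by simp only [psi] at h; linarith))
  have hg_pos (x : ℝ) (hx : d₁ ≤ x) : 0 < psiDeriv H x :=
    pos_of_antitoneOn_of_monotoneOn (by simp [psiDeriv, h1]) (antitoneOn_psiDeriv dH' dH'' h3a)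
      (monotoneOn_psiDeriv hzH.le dH' dH'' h3b) hc.1.le hgc (hc.2.le.trans hx)
  have hψ_mono : StrictMonoOn (psi H) (Ici d₁) :=
    strictMonoOn_of_hasDerivWithinAt_pos (convex_Ici d₁)
      (fun x _ => (hψ x).continuousAt.continuousWithinAt) (fun x _ => (hψ x).hasDerivWithinAt)
      fun x hx => hg_pos x (interior_subset hx)
  refine strictMonoOn_two_mul_div_one_sub_mul (fun x => (dH x).hasDerivAt)
    (fun x => (dH' x).hasDerivAt) (fun x hx => hH' x (hd₁.trans_le hx)) fun x hx => ?_
  have hψx : psi H d₁ < psi H x := hψ_mono self_mem_Ici hx.le hx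
  simp only [psi, hroot, sub_self] at hψx
  exact one_sub_sq_add_two_mul_mul_pos (by linarith [hH' x (hd₁.trans hx)])
    (hconc x (hd₁.trans hx)) (by linarith) (hg_pos x hx.le)

theorem stmt_10 (H : ℝ → ℝ) (zH : ℝ) (hzH : 0 < zH)
    (hC3 : ContDiff ℝ 3 H)
    (hodd : ∀ x, H (-x) = -H x)
    (h0 : H 0 = 0) (h1 : deriv H 0 = 1)
    (hH' : ∀ x > (0:ℝ), 0 < deriv H x ∧ deriv H x < 1)
    (hconc : ∀ x > (0:ℝ), deriv (deriv H) x < 0)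
    (h3a : ∀ x : ℝ, 0 ≤ x → x ≤ zH → deriv (deriv (deriv H)) x ≤ 0)
    (h3b : ∀ x : ℝ, zH < x → 0 < deriv (deriv (deriv H)) x)
    (hlim1 : Filter.Tendsto H Filter.atTop (nhds 1))
    (hlim2 : Filter.Tendsto H Filter.atBot (nhds (-1)))
    (d₁ : ℝ) (hd₁ : 0 < d₁)
    (hroot : d₁ * (1 + deriv H d₁) = 2 * H d₁)
    (huniq : ∀ x > (0:ℝ), x * (1 + deriv H x) = 2 * H x → x = d₁) :
    StrictMonoOn (fun x => 2 * H x / ((1 + deriv H x) * (1 - deriv H x)))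
      (Set.Ici d₁) :=
  stmt_10_general H zH hzH hC3 h0 h1 hH' hconc h3a h3b d₁ hd₁ hroot huniq
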